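/- Define J_M := (ρ/√g) P. Then: (1) for every tangent vector X = Σ_b X^b e_b, J_M(X) = (1/√g) Σ_{a,c,b} ε^{ac} g_{cb} X^b e_a, where ε^{12} = −ε^{21} = 1 and ε^{11} = ε^{22} = 0 (i.e. J_M restricted to the tangent plane is the almost complex structure determined by the induced metric); and (2) for every X ∈ ℝ^m, −J_M²(X) = Σ_{a,b} g^{ab} ⟨X, e_a⟩ e_b, and this map is the orthogonal projection of ℝ^m onto the tangent plane span{e₁, e₂}. -/

import Mathlib

open scoped BigOperators

noncomputable def pd (a : Fin 2) (f : ℝ × ℝ → ℝ) (u : ℝ × ℝ) : ℝ :=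
  fderiv ℝ f u (if a = 0 then (1, 0) else (0, 1))

noncomputable def pb (ρ f h : ℝ × ℝ → ℝ) (u : ℝ × ℝ) : ℝ :=
  (1 / ρ u) * (pd 0 f u * pd 1 h u - pd 1 f u * pd 0 h u)

noncomputable def vpd {m : ℕ} (F : ℝ × ℝ → Fin m → ℝ) (a : Fin 2) (u : ℝ × ℝ) : Fin m → ℝ :=
  fun i => pd a (fun v => F v i) u

noncomputable def dot {m : ℕ} (X Y : Fin m → ℝ) : ℝ := ∑ i, X i * Y i

noncomputable def gmat {m : ℕ} (x : ℝ × ℝ → Fin m → ℝ) (u : ℝ × ℝ) : Matrix (Fin 2) (Fin 2) ℝ :=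
  Matrix.of fun a b => dot (vpd x a u) (vpd x b u)

noncomputable def Pmap {m : ℕ} (ρ : ℝ × ℝ → ℝ) (x : ℝ × ℝ → Fin m → ℝ) (u : ℝ × ℝ)
    (X : Fin m → ℝ) : Fin m → ℝ :=
  fun i => ∑ j, pb ρ (fun v => x v i) (fun v => x v j) u * X j

noncomputable def Smap {m : ℕ} (ρ : ℝ × ℝ → ℝ) (x N : ℝ × ℝ → Fin m → ℝ) (u : ℝ × ℝ)
    (X : Fin m → ℝ) : Fin m → ℝ :=
  fun i => ∑ j, pb ρ (fun v => x v i) (fun v => N v j) u * X j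

noncomputable def STmap {m : ℕ} (ρ : ℝ × ℝ → ℝ) (x N : ℝ × ℝ → Fin m → ℝ) (u : ℝ × ℝ)
    (X : Fin m → ℝ) : Fin m → ℝ :=
  fun j => ∑ i, X i * pb ρ (fun v => x v i) (fun v => N v j) u

noncomputable def Bmap {m : ℕ} (ρ : ℝ × ℝ → ℝ) (x N : ℝ × ℝ → Fin m → ℝ) (u : ℝ × ℝ)
    (X : Fin m → ℝ) : Fin m → ℝ :=
  Pmap ρ x u (Smap ρ x N u X)

noncomputable def Amap {m : ℕ} (ρ : ℝ × ℝ → ℝ) (x N : ℝ × ℝ → Fin m → ℝ) (u : ℝ × ℝ)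
    (X : Fin m → ℝ) : Fin m → ℝ :=
  fun i => -(Pmap ρ x u (STmap ρ x N u X) i)

noncomputable def hmat {m : ℕ} (x N : ℝ × ℝ → Fin m → ℝ) (u : ℝ × ℝ) : Matrix (Fin 2) (Fin 2) ℝ :=
  Matrix.of fun a b => -(dot (vpd x a u) (vpd N b u))

noncomputable def Wmap {m : ℕ} (x N : ℝ × ℝ → Fin m → ℝ) (u : ℝ × ℝ) (a b : Fin 2) : ℝ :=
  ∑ c, (gmat x u)⁻¹ a c * hmat x N u c b

noncomputable def eps2 : Fin 2 → Fin 2 → ℝ := fun a b =>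
  if a = 0 ∧ b = 1 then 1 else if a = 1 ∧ b = 0 then -1 else 0

noncomputable def lc {n : ℕ} (f : Fin n → Fin n) : ℝ :=
  if h : Function.Bijective f then ((Equiv.Perm.sign (Equiv.ofBijective f h) : ℤ) : ℝ) else 0

def tuple3 {α : Type*} {q : ℕ} (i k l : α) (I : Fin q → α) : Fin (q + 3) → α :=
  Fin.cons i (Fin.cons k (Fin.cons l I))

noncomputable def Zvec {q : ℕ} (ρ : ℝ × ℝ → ℝ) (x : ℝ × ℝ → Fin (q + 3) → ℝ) (u : ℝ × ℝ)
    (I : Fin q → Fin (q + 3)) : Fin (q + 3) → ℝ :=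
  fun i => (ρ u / (2 * Real.sqrt ((gmat x u).det * (Nat.factorial q)))) *
    ∑ k, ∑ l, lc (tuple3 i k l I) * pb ρ (fun v => x v k) (fun v => x v l) u

lemma dot_comm' {m : ℕ} (X Y : Fin m → ℝ) : dot X Y = dot Y X := by
  simp [dot, mul_comm]

lemma dot_combo {m : ℕ} (e f g : Fin m → ℝ) (c d : ℝ) :
    dot e (fun j => c * f j + d * g j) = c * dot e f + d * dot e g := by
  simp only [dot, mul_add, Finset.sum_add_distrib, Finset.mul_sum]
  congr 1 <;> exact Finset.sum_congr rfl fun j _ => by ring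

lemma dot_smul_add {m : ℕ} (f g e : Fin m → ℝ) (c d : ℝ) :
    dot (c • f + d • g) e = c * dot f e + d * dot g e := by
  simp only [dot, Pi.add_apply, Pi.smul_apply, smul_eq_mul, add_mul,
    Finset.sum_add_distrib, Finset.mul_sum]
  congr 1 <;> exact Finset.sum_congr rfl fun j _ => by ring

lemma dot_sub_left {m : ℕ} (f g e : Fin m → ℝ) :
    dot (fun i => f i - g i) e = dot f e - dot g e := by
  simp only [dot, sub_mul, Finset.sum_sub_distrib]

lemma Pmap_eq {m : ℕ} (ρ : ℝ × ℝ → ℝ) (x : ℝ × ℝ → Fin m → ℝ) (u : ℝ × ℝ)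
    (X : Fin m → ℝ) (i : Fin m) :
    Pmap ρ x u X i =
      (1 / ρ u) * (vpd x 0 u i * dot (vpd x 1 u) X - vpd x 1 u i * dot (vpd x 0 u) X) := by
  simp only [Pmap, pb, dot, vpd, mul_sub, Finset.mul_sum, ← Finset.sum_sub_distrib]
  exact Finset.sum_congr rfl fun j _ => by ring

theorem statement13 (U : Set (ℝ × ℝ)) (hU : IsOpen U) (p : ℕ) (hp : 1 ≤ p)
    (ρ : ℝ × ℝ → ℝ) (hρ : ContDiffOn ℝ (⊤ : ℕ∞) ρ U) (hρ0 : ∀ u ∈ U, ρ u ≠ 0)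
    (x : ℝ × ℝ → Fin (p + 2) → ℝ) (hx : ContDiffOn ℝ (⊤ : ℕ∞) x U)
    (hind : ∀ u ∈ U, LinearIndependent ℝ ![vpd x 0 u, vpd x 1 u])
    (hg : ∀ u ∈ U, 0 < (gmat x u).det) :
    ∀ u ∈ U,
      (∀ Xc : Fin 2 → ℝ, ∀ i,
        (ρ u / Real.sqrt (gmat x u).det) *
            Pmap ρ x u (fun j => ∑ b, Xc b * vpd x b u j) i =
          (1 / Real.sqrt (gmat x u).det) *
            ∑ a, ∑ c, ∑ b, eps2 a c * gmat x u c b * Xc b * vpd x a u i) ∧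
      (∀ X : Fin (p + 2) → ℝ,
        (∀ i,
          -((ρ u / Real.sqrt (gmat x u).det) *
              Pmap ρ x u
                (fun j => (ρ u / Real.sqrt (gmat x u).det) * Pmap ρ x u X j) i) =
            ∑ a, ∑ b, (gmat x u)⁻¹ a b * dot X (vpd x a u) * vpd x b u i) ∧
        (fun i => ∑ a, ∑ b, (gmat x u)⁻¹ a b * dot X (vpd x a u) * vpd x b u i) ∈
          Submodule.span ℝ ({vpd x 0 u, vpd x 1 u} : Set (Fin (p + 2) → ℝ)) ∧
        (∀ a : Fin 2,
          dot (fun i => X i - ∑ a', ∑ b, (gmat x u)⁻¹ a' b * dot X (vpd x a' u) * vpd x b u i)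
            (vpd x a u) = 0)) ∧
      (∀ Y ∈ Submodule.span ℝ ({vpd x 0 u, vpd x 1 u} : Set (Fin (p + 2) → ℝ)), ∀ i,
        ∑ a, ∑ b, (gmat x u)⁻¹ a b * dot Y (vpd x a u) * vpd x b u i = Y i) := by
  intro u hu
  have hρu := hρ0 u hu
  have hdet := hg u hu
  have hdetne : (gmat x u).det ≠ 0 := ne_of_gt hdet
  have hs0 : (0:ℝ) < Real.sqrt (gmat x u).det := Real.sqrt_pos.mpr hdet
  have hss := Real.mul_self_sqrt hdet.le
  set s := Real.sqrt (gmat x u).det with hsdef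
  have hsne : s ≠ 0 := ne_of_gt hs0
  have hG : ∀ a b, gmat x u a b = dot (vpd x a u) (vpd x b u) := fun a b => rfl
  have hdet2 : (gmat x u).det =
      dot (vpd x 0 u) (vpd x 0 u) * dot (vpd x 1 u) (vpd x 1 u) -
        dot (vpd x 0 u) (vpd x 1 u) * dot (vpd x 1 u) (vpd x 0 u) := by
    rw [Matrix.det_fin_two]; rfl
  have hdne2 : dot (vpd x 0 u) (vpd x 0 u) * dot (vpd x 1 u) (vpd x 1 u) -
      dot (vpd x 0 u) (vpd x 1 u) * dot (vpd x 1 u) (vpd x 0 u) ≠ 0 := hdet2 ▸ hdetne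
  have hinv : ∀ a b, (gmat x u)⁻¹ a b =
      (gmat x u).det⁻¹ * (!![gmat x u 1 1, -(gmat x u 0 1);
        -(gmat x u 1 0), gmat x u 0 0] a b) := by
    intro a b; rw [Matrix.inv_def, Matrix.adjugate_fin_two]
    simp [Ring.inverse_eq_inv']
  have h00 : (gmat x u)⁻¹ 0 0 = (gmat x u).det⁻¹ * gmat x u 1 1 := by
    rw [hinv]; norm_num
  have h01 : (gmat x u)⁻¹ 0 1 = (gmat x u).det⁻¹ * (-(gmat x u 0 1)) := by
    rw [hinv]; norm_num
  have h10 : (gmat x u)⁻¹ 1 0 = (gmat x u).det⁻¹ * (-(gmat x u 1 0)) := by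
    rw [hinv]; norm_num
  have h11 : (gmat x u)⁻¹ 1 1 = (gmat x u).det⁻¹ * gmat x u 0 0 := by
    rw [hinv]; norm_num
  refine ⟨?_, ?_, ?_⟩
  · -- part (1)
    intro Xc i
    have hfun : (fun j => ∑ b, Xc b * vpd x b u j)
        = fun j => Xc 0 * vpd x 0 u j + Xc 1 * vpd x 1 u j := by
      funext j; rw [Fin.sum_univ_two]
    rw [hfun, Pmap_eq, dot_combo, dot_combo]
    simp only [Fin.sum_univ_two, eps2, hG]
    norm_num
    field_simp
    ring
  · -- part (2)
    intro X
    have hSfun : (fun i => ∑ a, ∑ b, (gmat x u)⁻¹ a b * dot X (vpd x a u) * vpd x b u i)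
        = fun i =>
          ((gmat x u)⁻¹ 0 0 * dot X (vpd x 0 u) + (gmat x u)⁻¹ 1 0 * dot X (vpd x 1 u)) *
              vpd x 0 u i +
            ((gmat x u)⁻¹ 0 1 * dot X (vpd x 0 u) + (gmat x u)⁻¹ 1 1 * dot X (vpd x 1 u)) *
              vpd x 1 u i := by
      funext i; simp only [Fin.sum_univ_two]; ring
    have hSa : ∀ a : Fin 2,
        dot (fun i => ∑ a', ∑ b, (gmat x u)⁻¹ a' b * dot X (vpd x a' u) * vpd x b u i)
          (vpd x a u) = dot X (vpd x a u) := by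
      intro a
      rw [hSfun, dot_comm', dot_combo, h00, h01, h10, h11]
      simp only [hG]
      rw [hdet2]
      fin_cases a <;>
        · simp only [Fin.mk_zero, Fin.mk_one, Fin.isValue,
            dot_comm' (vpd x 1 u) (vpd x 0 u)] at hdne2 ⊢
          rw [← sq] at hdne2
          field_simp
          ring
    refine ⟨?_, ?_, ?_⟩
    · -- -J² = projection formula
      intro i
      have hJ : (fun j => ρ u / s * Pmap ρ x u X j)
          = fun j => ((1 / s) * dot (vpd x 1 u) X) * vpd x 0 u j +
              (-((1 / s) * dot (vpd x 0 u) X)) * vpd x 1 u j := by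
        funext j; rw [Pmap_eq]; field_simp; ring
      rw [hJ, Pmap_eq, dot_combo, dot_combo]
      simp only [Fin.sum_univ_two, h00, h01, h10, h11, hG]
      rw [dot_comm' X (vpd x 0 u), dot_comm' X (vpd x 1 u),
        dot_comm' (vpd x 1 u) (vpd x 0 u), ← hss]
      field_simp
      ring
    · -- span membership
      have hrw : (fun i => ∑ a, ∑ b, (gmat x u)⁻¹ a b * dot X (vpd x a u) * vpd x b u i)
          = ((gmat x u)⁻¹ 0 0 * dot X (vpd x 0 u) + (gmat x u)⁻¹ 1 0 * dot X (vpd x 1 u)) •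
              vpd x 0 u +
            ((gmat x u)⁻¹ 0 1 * dot X (vpd x 0 u) + (gmat x u)⁻¹ 1 1 * dot X (vpd x 1 u)) •
              vpd x 1 u := by
        funext i
        simp only [Fin.sum_univ_two, Pi.add_apply, Pi.smul_apply, smul_eq_mul]
        ring
      rw [hrw]
      exact Submodule.add_mem _
        (Submodule.smul_mem _ _ (Submodule.subset_span (Set.mem_insert _ _)))
        (Submodule.smul_mem _ _ (Submodule.subset_span
          (Set.mem_insert_of_mem _ rfl)))
    · -- orthogonality
      intro a
      rw [dot_sub_left, hSa a, dot_comm' X (vpd x a u), sub_self]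
  · -- part (3): projection is identity on the span
    intro Y hY i
    rw [Submodule.mem_span_pair] at hY
    obtain ⟨c, d, rfl⟩ := hY
    simp only [Fin.sum_univ_two, dot_smul_add, h00, h01, h10, h11, hG,
      Pi.add_apply, Pi.smul_apply, smul_eq_mul]
    rw [dot_comm' (vpd x 1 u) (vpd x 0 u), hdet2,
      dot_comm' (vpd x 1 u) (vpd x 0 u)]
    rw [dot_comm' (vpd x 1 u) (vpd x 0 u)] at hdne2
    rw [← sq] at hdne2
    field_simp
    ring
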